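/- Every unspecified reception configuration s of a communicating system S is a p-lock configuration of S for some participant p. -/

import Mathlib

namespace CFSM

/-- Direction of a communication action: output (`!`) or input (`?`). -/
inductive Dir : Type where
  | out : Dir
  | inp : Dir
deriving DecidableEq

instance : Fintype Dir :=
  ⟨{Dir.out, Dir.inp}, fun x => by cases x <;> simp⟩

/-- An action `pq!a` (output) or `pq?a` (input) over participants `P` and messages `A`:
`snd` is the sender `p`, `rcv` the receiver `q`, `msg` the message `a`. -/
structure Act (P : Type) (A : Type) : Type where
  snd : P
  rcv : P
  dir : Dir
  msg : A

instance {P A : Type} [Finite P] [Finite A] : Finite (Act P A) :=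
  Finite.of_injective (fun l => (l.snd, l.rcv, l.dir, l.msg))
    (fun a b h => by
      cases a; cases b
      simp only [Prod.mk.injEq] at h
      obtain ⟨h1, h2, h3, h4⟩ := h
      subst h1; subst h2; subst h3; subst h4; rfl)

/-- The subject of an action: the sender of an output, the receiver of an input. -/
def Act.subject {P A : Type} (l : Act P A) : P :=
  match l.dir with
  | .out => l.snd
  | .inp => l.rcv

/-- A communicating system over participants `P` and messages `A`:
one machine (state type, initial state and transition relation) per participant. -/
structure CS (P : Type) (A : Type) : Type 1 where
  St : P → Type
  init : ∀ p, St p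
  delta : ∀ p, Set (St p × Act P A × St p)

/-- All actions of the machine of participant `p` have subject `p`
(the name of the machine) and distinct endpoints. -/
def CS.WellFormed {P A : Type} (S : CS P A) : Prop :=
  ∀ p t, t ∈ S.delta p → ((t.2.1 : Act P A).subject = p ∧ t.2.1.snd ≠ t.2.1.rcv)

/-- A configuration: a local state for each machine and a FIFO buffer
for each ordered pair of participants. -/
structure Config {P A : Type} (S : CS P A) : Type where
  st : ∀ p, S.St p
  ch : P → P → List A

/-- The initial configuration: all machines in their initial state, all channels empty. -/
def CS.initConfig {P A : Type} (S : CS P A) : Config S :=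
  ⟨S.init, fun _ _ => []⟩

/-- The labelled transition relation between configurations. -/
def StepL {P A : Type} (S : CS P A) (c : Config S) (l : Act P A) (c' : Config S) : Prop :=
  match l.dir with
  | .out =>
      (c.st l.snd, l, c'.st l.snd) ∈ S.delta l.snd ∧
      (∀ p, p ≠ l.snd → c'.st p = c.st p) ∧
      c'.ch l.snd l.rcv = c.ch l.snd l.rcv ++ [l.msg] ∧
      (∀ p q, (p, q) ≠ (l.snd, l.rcv) → c'.ch p q = c.ch p q)
  | .inp =>
      (c.st l.rcv, l, c'.st l.rcv) ∈ S.delta l.rcv ∧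
      (∀ p, p ≠ l.rcv → c'.st p = c.st p) ∧
      c.ch l.snd l.rcv = l.msg :: c'.ch l.snd l.rcv ∧
      (∀ p q, (p, q) ≠ (l.snd, l.rcv) → c'.ch p q = c.ch p q)

/-- Unlabelled transition relation. -/
def Step {P A : Type} (S : CS P A) (c c' : Config S) : Prop :=
  ∃ l, StepL S c l c'

/-- Reachability between configurations. -/
def Reach {P A : Type} (S : CS P A) : Config S → Config S → Prop :=
  Relation.ReflTransGen (Step S)

/-- The set of configurations reachable from the initial configuration. -/
def RC {P A : Type} (S : CS P A) : Set (Config S) :=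
  {c | Reach S S.initConfig c}

/-- A local state is final if it has no outgoing transition. -/
def FinalSt {Q P A : Type} (δ : Set (Q × Act P A × Q)) (q : Q) : Prop :=
  ∀ l q', (q, l, q') ∉ δ

/-- A local state is receiving if it is not final and all its outgoing
transitions are labelled with input actions. -/
def ReceivingSt {Q P A : Type} (δ : Set (Q × Act P A × Q)) (q : Q) : Prop :=
  (∃ l q', (q, l, q') ∈ δ) ∧ ∀ l q', (q, l, q') ∈ δ → (l : Act P A).dir = Dir.inp

/-- A local state is mixed if it has at least one outgoing output-labelled
transition and at least one outgoing input-labelled transition. -/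
def MixedSt {Q P A : Type} (δ : Set (Q × Act P A × Q)) (q : Q) : Prop :=
  (∃ l q', (q, l, q') ∈ δ ∧ (l : Act P A).dir = Dir.out) ∧
  (∃ l q', (q, l, q') ∈ δ ∧ (l : Act P A).dir = Dir.inp)

/-- A machine has no mixed states. -/
def NoMixed {Q P A : Type} (δ : Set (Q × Act P A × Q)) : Prop :=
  ∀ q, ¬ MixedSt δ q

/-- Deadlock configuration: all channels empty but all machines in receiving states. -/
def DeadlockConfig {P A : Type} (S : CS P A) (c : Config S) : Prop :=
  (∀ p q, c.ch p q = []) ∧ ∀ p, ReceivingSt (S.delta p) (c.st p)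

def DeadlockFree {P A : Type} (S : CS P A) : Prop :=
  ∀ c ∈ RC S, ¬ DeadlockConfig S c

/-- Orphan-message configuration: all machines final but some channel nonempty. -/
def OrphanConfig {P A : Type} (S : CS P A) (c : Config S) : Prop :=
  (∀ p, FinalSt (S.delta p) (c.st p)) ∧ ∃ p q, c.ch p q ≠ []

def OrphanFree {P A : Type} (S : CS P A) : Prop :=
  ∀ c ∈ RC S, ¬ OrphanConfig S c

/-- Unspecified reception configuration: some machine `r` is in a receiving state and,
for every input transition of `r`, the corresponding channel is nonempty with a
first element different from the expected message. -/
def URConfig {P A : Type} (S : CS P A) (c : Config S) : Prop :=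
  ∃ r, ReceivingSt (S.delta r) (c.st r) ∧
    ∀ s a q', (c.st r, Act.mk s r Dir.inp a, q') ∈ S.delta r →
      (c.ch s r ≠ [] ∧ ¬ ∃ w, c.ch s r = a :: w)

def ReceptionErrorFree {P A : Type} (S : CS P A) : Prop :=
  ∀ c ∈ RC S, ¬ URConfig S c

/-- Progress: every reachable configuration has an outgoing transition or all
machines are in final states. -/
def ProgressProp {P A : Type} (S : CS P A) : Prop :=
  ∀ c ∈ RC S, (∃ c', Step S c c') ∨ ∀ p, FinalSt (S.delta p) (c.st p)

/-- `p`-lock configuration: `p` is in a receiving state and never occurs as the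
subject of an action in any transition sequence from `c`. -/
def PLockConfig {P A : Type} (S : CS P A) (c : Config S) (p : P) : Prop :=
  ReceivingSt (S.delta p) (c.st p) ∧
  ∀ c1 l c2, Reach S c c1 → StepL S c1 l c2 → l.subject ≠ p

def LockFree {P A : Type} (S : CS P A) : Prop :=
  ∀ c ∈ RC S, ∀ p, ¬ PLockConfig S c p

section Composition

variable {I : Type} {P : I → Type} {A : Type}

/-- Messages occurring in input actions of the machine of `p`. -/
def inMsgs {Pp A : Type} (S : CS Pp A) (p : Pp) : Set A :=
  {a | ∃ q s q', (q, Act.mk s p Dir.inp a, q') ∈ S.delta p}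

/-- Messages occurring in output actions of the machine of `p`. -/
def outMsgs {Pp A : Type} (S : CS Pp A) (p : Pp) : Set A :=
  {a | ∃ q r q', (q, Act.mk p r Dir.out a, q') ∈ S.delta p}

/-- `CM` is a connection model for the interfaces `hh i` of the family `S`
(the interface `h_i` is represented by its index `i`). -/
def IsConnModel (S : ∀ i, CS (P i) A) (hh : ∀ i, P i) (CM : Set (I × A × I)) : Prop :=
  ∀ i a,
    (a ∈ inMsgs (S i) (hh i) →
      ∃ j, j ≠ i ∧ a ∈ outMsgs (S j) (hh j) ∧ (i, a, j) ∈ CM) ∧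
    (a ∈ outMsgs (S i) (hh i) →
      ∃ j, j ≠ i ∧ a ∈ inMsgs (S j) (hh j) ∧ (j, a, i) ∈ CM)

/-- `CM` is a strong connection model: additionally the connecting partner is unique. -/
def IsStrongConnModel (S : ∀ i, CS (P i) A) (hh : ∀ i, P i) (CM : Set (I × A × I)) : Prop :=
  IsConnModel S hh CM ∧
  ∀ i a,
    (a ∈ inMsgs (S i) (hh i) → ∃! j, (i, a, j) ∈ CM) ∧
    (a ∈ outMsgs (S i) (hh i) → ∃! j, (j, a, i) ∈ CM)

/-- Conditions (*) and (**) for a candidate transition relation `d` of the local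
connection policy of interface `hh i` (the name `k_i` is represented by `i`). -/
def PolicySat (S : ∀ i, CS (P i) A) (hh : ∀ i, P i) (CM : Set (I × A × I)) (i : I)
    (d : Set ((S i).St (hh i) × Act I A × (S i).St (hh i))) : Prop :=
  (∀ q r a q', (q, Act.mk r (hh i) Dir.inp a, q') ∈ (S i).delta (hh i) →
      ∃ j, j ≠ i ∧ (i, a, j) ∈ CM ∧ (q, Act.mk i j Dir.out a, q') ∈ d) ∧
  (∀ q r a q', (q, Act.mk (hh i) r Dir.out a, q') ∈ (S i).delta (hh i) →
      ∃ j, j ≠ i ∧ (j, a, i) ∈ CM ∧ (q, Act.mk j i Dir.inp a, q') ∈ d)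

/-- `d` belongs to the local connection policy set `IS(M_{h_i}, CM)`:
it is a minimal relation satisfying (*) and (**).  (The states `q̇` of the
policy machine are identified with the states `q` of `M_{h_i}`.) -/
def InIS (S : ∀ i, CS (P i) A) (hh : ∀ i, P i) (CM : Set (I × A × I)) (i : I)
    (d : Set ((S i).St (hh i) × Act I A × (S i).St (hh i))) : Prop :=
  PolicySat S hh CM i d ∧ ∀ d', d' ⊆ d → PolicySat S hh CM i d' → d' = d

/-- The communicating system (over the participant type `I` of names `k_i`)
determined by the family of transition relations `Kd` of a connection policy. -/
def policyCS (S : ∀ i, CS (P i) A) (hh : ∀ i, P i)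
    (Kd : ∀ i, Set ((S i).St (hh i) × Act I A × (S i).St (hh i))) : CS I A where
  St := fun i => (S i).St (hh i)
  init := fun i => (S i).init (hh i)
  delta := Kd

/-- `Kd` is a connection policy for the interfaces `hh` complying with `CM`. -/
def IsConnPolicy (S : ∀ i, CS (P i) A) (hh : ∀ i, P i) (CM : Set (I × A × I))
    (Kd : ∀ i, Set ((S i).St (hh i) × Act I A × (S i).St (hh i))) : Prop :=
  ∀ i, InIS S hh CM i (Kd i)

/-- States of the gateway for interface `hh i`: the original states plus one
fresh state per transition of `M_{h_i}`. -/
abbrev GWState (S : ∀ i, CS (P i) A) (hh : ∀ i, P i) (i : I) : Type :=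
  (S i).St (hh i) ⊕ ((S i).St (hh i) × Act (P i) A × (S i).St (hh i))

/-- Lifting of a local action of system `i` to the composed participant type. -/
def liftAct (i : I) (l : Act (P i) A) : Act ((j : I) × P j) A :=
  Act.mk ⟨i, l.snd⟩ ⟨i, l.rcv⟩ l.dir l.msg

/-- Transition relation of the gateway `M_{h_i} ⟲ M_{k_i}`. -/
def GWdelta (S : ∀ i, CS (P i) A) (hh : ∀ i, P i)
    (Kd : ∀ i, Set ((S i).St (hh i) × Act I A × (S i).St (hh i))) (i : I) :
    Set (GWState S hh i × Act ((j : I) × P j) A × GWState S hh i) :=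
  {x | ∃ q a q',
    (∃ s r, (q, Act.mk (hh i) s Dir.out a, q') ∈ (S i).delta (hh i) ∧
        (q, Act.mk r i Dir.inp a, q') ∈ Kd i ∧
        (x = (Sum.inl q, Act.mk ⟨r, hh r⟩ ⟨i, hh i⟩ Dir.inp a,
              Sum.inr (q, Act.mk (hh i) s Dir.out a, q')) ∨
         x = (Sum.inr (q, Act.mk (hh i) s Dir.out a, q'),
              Act.mk ⟨i, hh i⟩ ⟨i, s⟩ Dir.out a, Sum.inl q'))) ∨
    (∃ s r, (q, Act.mk s (hh i) Dir.inp a, q') ∈ (S i).delta (hh i) ∧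
        (q, Act.mk i r Dir.out a, q') ∈ Kd i ∧
        (x = (Sum.inl q, Act.mk ⟨i, s⟩ ⟨i, hh i⟩ Dir.inp a,
              Sum.inr (q, Act.mk s (hh i) Dir.inp a, q')) ∨
         x = (Sum.inr (q, Act.mk s (hh i) Dir.inp a, q'),
              Act.mk ⟨i, hh i⟩ ⟨r, hh r⟩ Dir.out a, Sum.inl q')))}

open Classical in
/-- State type of the machine of participant `⟨i, p⟩` in the multicomposition:
the gateway state type if `p` is the interface of system `i`, the original
state type otherwise. -/
noncomputable def MCSt (S : ∀ i, CS (P i) A) (hh : ∀ i, P i) (x : (i : I) × P i) : Type :=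
  if x.2 = hh x.1 then GWState S hh x.1 else (S x.1).St x.2

/-- The multicomposition `MC({S_i}, K)`: all machines of the single systems,
with the machine of each interface `hh i` replaced by its gateway. -/
noncomputable def MC (S : ∀ i, CS (P i) A) (hh : ∀ i, P i)
    (Kd : ∀ i, Set ((S i).St (hh i) × Act I A × (S i).St (hh i))) :
    CS ((i : I) × P i) A where
  St := MCSt S hh
  init := fun x => by
    by_cases hp : x.2 = hh x.1
    · have h : MCSt S hh x = GWState S hh x.1 := by simp [MCSt, hp]
      rw [h]; exact Sum.inl ((S x.1).init (hh x.1))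
    · have h : MCSt S hh x = (S x.1).St x.2 := by simp [MCSt, hp]
      rw [h]; exact (S x.1).init x.2
  delta := fun x => by
    by_cases hp : x.2 = hh x.1
    · have h : MCSt S hh x = GWState S hh x.1 := by simp [MCSt, hp]
      rw [h]; exact GWdelta S hh Kd x.1
    · have h : MCSt S hh x = (S x.1).St x.2 := by simp [MCSt, hp]
      rw [h]
      exact {t | ∃ q l q', (q, l, q') ∈ (S x.1).delta x.2 ∧ t = (q, liftAct x.1 l, q')}

/-- The state of the gateway of interface `hh i` in a configuration of the
multicomposition, as an element of `GWState`. -/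
noncomputable def toGW (S : ∀ i, CS (P i) A) (hh : ∀ i, P i) (i : I)
    (x : MCSt S hh ⟨i, hh i⟩) : GWState S hh i :=
  cast (by simp [MCSt]) x

/-- The state of a non-interface participant in a configuration of the
multicomposition, as an element of its original state type. -/
noncomputable def toLoc (S : ∀ i, CS (P i) A) (hh : ∀ i, P i) {i : I} {p : P i}
    (hp : p ≠ hh i) (x : MCSt S hh ⟨i, p⟩) : (S i).St p :=
  cast (by simp [MCSt, hp]) x

/-- Projection of a configuration of the multicomposition to system `S i`,
assuming the gateway state of `hh i` is not a fresh intermediate state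
(i.e. it is of the form `Sum.inl q`). -/
noncomputable def projSys (S : ∀ i, CS (P i) A) (hh : ∀ i, P i)
    (Kd : ∀ i, Set ((S i).St (hh i) × Act I A × (S i).St (hh i)))
    (i : I) (s : Config (MC S hh Kd))
    (hq : ∃ q, toGW S hh i (s.st ⟨i, hh i⟩) = Sum.inl q) : Config (S i) where
  st := fun p => by
    by_cases hp : p = hh i
    · rw [hp]; exact hq.choose
    · exact toLoc S hh hp (s.st ⟨i, p⟩)
  ch := fun p q => s.ch ⟨i, p⟩ ⟨i, q⟩

/-- Projection of a configuration of the multicomposition to the connection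
policy `K`, assuming no gateway is in a fresh intermediate state. -/
noncomputable def projPolicy (S : ∀ i, CS (P i) A) (hh : ∀ i, P i)
    (Kd : ∀ i, Set ((S i).St (hh i) × Act I A × (S i).St (hh i)))
    (s : Config (MC S hh Kd))
    (hq : ∀ i, ∃ q, toGW S hh i (s.st ⟨i, hh i⟩) = Sum.inl q) :
    Config (policyCS S hh Kd) where
  st := fun i => (hq i).choose
  ch := fun i j => s.ch ⟨i, hh i⟩ ⟨j, hh j⟩

end Composition

end CFSM

/-!
Let `r` be the participant witnessing the unspecified reception. As long as `r` itself does not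
move, its local state stays the same and every channel into `r` only grows at its end, so `r`
still has only input transitions, each of which expects a message different from the (unchanged)
head of its channel. Hence `r` can never move again.
-/

namespace CFSM

variable {P A : Type} {S : CS P A}

theorem StepL.st_eq_of_subject_ne {c c' : Config S} {l : Act P A} {p : P}
    (h : StepL S c l c') (hp : l.subject ≠ p) : c'.st p = c.st p := by
  obtain ⟨snd, rcv, dir, msg⟩ := l
  cases dir <;> exact h.2.1 p (Ne.symm hp)

theorem StepL.ch_prefix_of_subject_ne {c c' : Config S} {l : Act P A} {r : P}
    (h : StepL S c l c') (hr : l.subject ≠ r) (s : P) : c.ch s r <+: c'.ch s r := by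
  obtain ⟨snd, rcv, dir, msg⟩ := l
  cases dir
  · by_cases hsr : (s, r) = (snd, rcv)
    · obtain ⟨rfl, rfl⟩ := Prod.mk.inj hsr
      exact h.2.2.1 ▸ List.prefix_append _ _
    · exact h.2.2.2 s r hsr ▸ List.prefix_refl _
  · have hsr : (s, r) ≠ (snd, rcv) := fun he => hr (congrArg Prod.snd he).symm
    exact h.2.2.2 s r hsr ▸ List.prefix_refl _

def InputsBlocked (S : CS P A) (c : Config S) (r : P) : Prop :=
  ∀ s a q', (c.st r, Act.mk s r Dir.inp a, q') ∈ S.delta r →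
    c.ch s r ≠ [] ∧ ¬ ∃ w, c.ch s r = a :: w

section Blocked

variable {r : P} {c₀ : Config S}
  (hrecv : ReceivingSt (S.delta r) (c₀.st r)) (hblocked : InputsBlocked S c₀ r)
include hrecv hblocked

theorem StepL.subject_ne_of_blocked {c c' : Config S} {l : Act P A}
    (hst : c.st r = c₀.st r) (hch : ∀ s, c₀.ch s r <+: c.ch s r) (h : StepL S c l c') :
    l.subject ≠ r := by
  obtain ⟨snd, rcv, dir, msg⟩ := l
  cases dir
  · rintro (rfl : snd = r)
    cases hrecv.2 _ _ (hst ▸ h.1)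
  · rintro (rfl : rcv = r)
    obtain ⟨hne, hhead⟩ := hblocked snd msg _ (hst ▸ h.1)
    obtain ⟨w, hw⟩ := hch snd
    obtain ⟨a, t, ht⟩ := List.exists_cons_of_ne_nil hne
    rw [ht, h.2.2.1, List.cons_append, List.cons_eq_cons] at hw
    obtain ⟨rfl, -⟩ := hw
    exact hhead ⟨t, ht⟩

theorem reach_st_eq_and_ch_prefix_of_blocked {c : Config S} (h : Reach S c₀ c) :
    c.st r = c₀.st r ∧ ∀ s, c₀.ch s r <+: c.ch s r := by
  induction h with
  | refl => exact ⟨rfl, fun _ => List.prefix_refl _⟩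
  | tail _ hstep ih =>
    obtain ⟨l, hl⟩ := hstep
    have hr := hl.subject_ne_of_blocked hrecv hblocked ih.1 ih.2
    exact ⟨(hl.st_eq_of_subject_ne hr).trans ih.1,
      fun s => (ih.2 s).trans (hl.ch_prefix_of_subject_ne hr s)⟩

end Blocked

end CFSM

open CFSM in
theorem urConfig_is_plock_general
    {P A : Type} (S : CS P A)
    (c : Config S) (hc : URConfig S c) :
    ∃ p, PLockConfig S c p := by
  obtain ⟨r, hrecv, hblocked⟩ := hc
  refine ⟨r, hrecv, fun c₁ l c₂ hreach hstep => ?_⟩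
  obtain ⟨hst, hch⟩ := reach_st_eq_and_ch_prefix_of_blocked hrecv hblocked hreach
  exact hstep.subject_ne_of_blocked hrecv hblocked hst hch

open CFSM in
/-- every unspecified reception configuration is a `p`-lock configuration
for some participant `p`. -/
theorem urConfig_is_plock
    {P A : Type} [Finite P] [Finite A] (S : CS P A)
    (hfin : ∀ p, Finite (S.St p)) (hwf : S.WellFormed)
    (c : Config S) (hc : URConfig S c) :
    ∃ p, PLockConfig S c p :=
  urConfig_is_plock_general S c hc
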